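/- arXiv:1704.04781 — 10 statements merged into one kernel-verified Lean document; each statement's English description precedes it below -/
import Mathlib

section
/- Let (A, ↖, ↗, ↙, ↘) be a quadri-algebra. Then the operations x ≻ y := x ↗ y + x ↘ y and x ≺ y := x ↖ y + x ↙ y make (A, ≺, ≻) into a dendriform dialgebra (the associated horizontal dendriform dialgebra). -/
/-- The dendriform dialgebra axioms for a pair of binary operations. -/
def DendriformEqs {A : Type*} [Add A] (p s : A → A → A) : Prop :=
  ∀ x y z : A,
    p (p x y) z = p x (p y z + s y z) ∧
    p (s x y) z = s x (p y z) ∧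
    s (p x y + s x y) z = s x (s y z)

/-- The nine quadri-algebra axioms for four binary operations
`nw = ↖`, `ne = ↗`, `sw = ↙`, `se = ↘`. -/
def QuadriEqs {A : Type*} [Add A] (nw ne sw se : A → A → A) : Prop :=
  ∀ x y z : A,
    nw (nw x y) z = nw x (nw y z + ne y z + sw y z + se y z) ∧
    nw (ne x y) z = ne x (nw y z + sw y z) ∧
    ne (nw x y + ne x y) z = ne x (ne y z + se y z) ∧
    nw (sw x y) z = sw x (nw y z + ne y z) ∧
    nw (se x y) z = se x (nw y z) ∧
    ne (sw x y + se x y) z = se x (ne y z) ∧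
    sw (nw x y + sw x y) z = sw x (sw y z + se y z) ∧
    sw (ne x y + se x y) z = se x (sw y z) ∧
    se (nw x y + ne x y + sw x y + se x y) z = se x (se y z)

/-! Each dendriform axiom is the sum of three quadri-algebra axioms: splitting the outer `≺`
(resp. `≻`) of the left-hand side into `↖ + ↙` (resp. `↗ + ↘`) and bracketing by bilinearity,
`(x≺y)≺z` is the sum of axioms 1, 4, 7, `(x≻y)≺z` of axioms 2, 5, 8 and `(x⋆y)≻z` of
axioms 3, 6, 9. -/

section HorizontalDendriform

variable {R M : Type*} [CommSemiring R] [AddCommMonoid M] [Module R M]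
  {nw ne sw se : M →ₗ[R] M →ₗ[R] M}

theorem QuadriEqs.horizontal_prec_prec
    (h : QuadriEqs (fun x y => nw x y) (fun x y => ne x y) (fun x y => sw x y)
      (fun x y => se x y)) (x y z : M) :
    nw (nw x y + sw x y) z + sw (nw x y + sw x y) z =
      nw x (nw y z + sw y z + (ne y z + se y z)) +
        sw x (nw y z + sw y z + (ne y z + se y z)) := by
  obtain ⟨e1, -, -, e4, -, -, e7, -, -⟩ := h x y z
  dsimp only at e1 e4 e7
  rw [LinearMap.map_add₂ nw, e1, e4, e7]
  simp only [map_add]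
  abel

theorem QuadriEqs.horizontal_succ_prec
    (h : QuadriEqs (fun x y => nw x y) (fun x y => ne x y) (fun x y => sw x y)
      (fun x y => se x y)) (x y z : M) :
    nw (ne x y + se x y) z + sw (ne x y + se x y) z =
      ne x (nw y z + sw y z) + se x (nw y z + sw y z) := by
  obtain ⟨-, e2, -, -, e5, -, -, e8, -⟩ := h x y z
  dsimp only at e2 e5 e8
  rw [LinearMap.map_add₂ nw, e2, e5, e8]
  simp only [map_add]
  abel

theorem QuadriEqs.horizontal_star_succ
    (h : QuadriEqs (fun x y => nw x y) (fun x y => ne x y) (fun x y => sw x y)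
      (fun x y => se x y)) (x y z : M) :
    ne (nw x y + sw x y + (ne x y + se x y)) z + se (nw x y + sw x y + (ne x y + se x y)) z =
      ne x (ne y z + se y z) + se x (ne y z + se y z) := by
  obtain ⟨-, -, e3, -, -, e6, -, -, e9⟩ := h x y z
  dsimp only at e3 e6 e9
  rw [add_add_add_comm, LinearMap.map_add₂ ne, e3, e6, ← add_assoc (nw x y + ne x y), e9]
  simp only [map_add]
  abel

end HorizontalDendriform

/-- the associated horizontal dendriform dialgebra
`x ≺ y = x↖y + x↙y`, `x ≻ y = x↗y + x↘y` of a quadri-algebra. -/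
theorem quadri_horizontal_dendriform {F A : Type*} [Field F] [AddCommGroup A] [Module F A]
    (nw ne sw se : A →ₗ[F] A →ₗ[F] A)
    (h : QuadriEqs (fun x y => nw x y) (fun x y => ne x y)
      (fun x y => sw x y) (fun x y => se x y)) :
    DendriformEqs (fun x y => nw x y + sw x y) (fun x y => ne x y + se x y) := fun x y z =>
  ⟨h.horizontal_prec_prec x y z, h.horizontal_succ_prec x y z, h.horizontal_star_succ x y z⟩
end

section
/- Let (A, ↖, ↗, ↙, ↘) be a quadri-algebra. Then the operations x ∧ y := x ↖ y + x ↗ y and x ∨ y := x ↙ y + x ↘ y make (A, ∧, ∨) into a dendriform dialgebra (the associated vertical dendriform dialgebra), where ∧ plays the role of ≺ and ∨ the role of ≻. -/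
/-! Each dendriform axiom for `∧ = ↖ + ↗` and `∨ = ↙ + ↘` is, after expanding both sides by
biadditivity, the sum of one row of three quadri-algebra axioms: the first of them is the sum of
the axioms with left-hand sides `(x↖y)↖z`, `(x↗y)↖z`, `(x∧y)↗z`, the second of the next three,
the third of the last three. -/

theorem QuadriEqs.vertical_dendriformEqs {A : Type*} [AddCommMonoid A]
    (nw ne sw se : A →+ A →+ A)
    (h : QuadriEqs (fun x y => nw x y) (fun x y => ne x y)
      (fun x y => sw x y) (fun x y => se x y)) :
    DendriformEqs (fun x y => nw x y + ne x y) (fun x y => sw x y + se x y) := by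
  intro x y z
  obtain ⟨h1, h2, h3, h4, h5, h6, h7, h8, h9⟩ := h x y z
  simp only [map_add, AddMonoidHom.add_apply] at *
  refine ⟨?_, ?_, ?_⟩
  · rw [h1, h2, h3]; abel
  · rw [h4, h5, h6]; abel
  · rw [← h7, ← h8, ← h9]; abel

/-- the associated vertical dendriform dialgebra
`x ∧ y = x↖y + x↗y` (playing the role of ≺), `x ∨ y = x↙y + x↘y`
(playing the role of ≻) of a quadri-algebra. -/
theorem quadri_vertical_dendriform {F A : Type*} [Field F] [AddCommGroup A] [Module F A]
    (nw ne sw se : A →ₗ[F] A →ₗ[F] A)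
    (h : QuadriEqs (fun x y => nw x y) (fun x y => ne x y)
      (fun x y => sw x y) (fun x y => se x y)) :
    DendriformEqs (fun x y => nw x y + ne x y) (fun x y => sw x y + se x y) :=
  QuadriEqs.vertical_dendriformEqs (LinearMap.toAddMonoidHom'.comp nw.toAddMonoidHom)
    (LinearMap.toAddMonoidHom'.comp ne.toAddMonoidHom)
    (LinearMap.toAddMonoidHom'.comp sw.toAddMonoidHom)
    (LinearMap.toAddMonoidHom'.comp se.toAddMonoidHom) h
end

section
/- Let (V, l_≺, r_≺, l_≻, r_≻) be a bimodule of a dendriform dialgebra (A, ≺, ≻), where V is finite-dimensional. Then (V*, −r_≻*, l_≻* + l_≺*, r_≻* + r_≺*, −l_≺*) is a bimodule of (A, ≺, ≻), where for a linear map ρ : A → gl(V), the map ρ* : A → gl(V*) is defined by ⟨ρ*(x)v*, u⟩ = ⟨v*, ρ(x)u⟩ for x ∈ A, u ∈ V, v* ∈ V*. -/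
/-- The bimodule axioms for a dendriform dialgebra `(A, p, s)` acting on `V`
via `l_≺ = lp`, `r_≺ = rp`, `l_≻ = ls`, `r_≻ = rs`. -/
def DendBimoduleEqs {F A V : Type*} [Field F] [AddCommGroup A] [Module F A]
    [AddCommGroup V] [Module F V]
    (p s : A → A → A) (lp rp ls rs : A → Module.End F V) : Prop :=
  ∀ x y : A,
    rp y * rp x = rp (p x y + s x y) ∧
    rp y * lp x = lp x * (rp y + rs y) ∧
    lp (p x y) = lp x * (lp y + ls y) ∧
    rp y * rs x = rs (p x y) ∧
    rp y * ls x = ls x * rp y ∧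
    lp (s x y) = ls x * lp y ∧
    rs y * (rp x + rs x) = rs (s x y) ∧
    rs y * (lp x + ls x) = ls x * rs y ∧
    ls (p x y + s x y) = ls x * ls y

namespace LinearMap

section

variable {R M N : Type*} [CommSemiring R] [AddCommMonoid M] [Module R M] [AddCommMonoid N]
  [Module R N]

theorem dualMap_add (f g : M →ₗ[R] N) : (f + g).dualMap = f.dualMap + g.dualMap :=
  map_add Module.Dual.transpose f g

theorem dualMap_mul (f g : Module.End R M) : (f * g).dualMap = g.dualMap * f.dualMap :=
  (dualMap_comp_dualMap g f).symm

end

theorem dualMap_neg {R M N : Type*} [CommRing R] [AddCommMonoid M] [Module R M] [AddCommGroup N]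
    [Module R N] (f : M →ₗ[R] N) : (-f).dualMap = -f.dualMap :=
  map_neg Module.Dual.transpose f

end LinearMap

namespace DendBimoduleEqs

variable {F A V : Type*} [Field F] [AddCommGroup A] [Module F A] [AddCommGroup V] [Module F V]
  {p s : A → A → A} {lp rp ls rs : A → Module.End F V}

theorem lstar_mul (h : DendBimoduleEqs p s lp rp ls rs) (x y : A) :
    (lp x + ls x) * (lp y + ls y) = lp (p x y) + lp (s x y) + ls (p x y + s x y) := by
  obtain ⟨-, -, h3, -, -, h6, -, -, h9⟩ := h x y
  linear_combination (norm := noncomm_ring) -h3 - h6 - h9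

theorem rstar_mul (h : DendBimoduleEqs p s lp rp ls rs) (x y : A) :
    (rp y + rs y) * (rp x + rs x) = rp (p x y + s x y) + rs (p x y) + rs (s x y) := by
  obtain ⟨h1, -, -, h4, -, -, h7, -, -⟩ := h x y
  linear_combination (norm := noncomm_ring) h1 + h4 + h7

theorem commute_rstar_lstar (h : DendBimoduleEqs p s lp rp ls rs) (x y : A) :
    Commute (rp x + rs x) (lp y + ls y) := by
  obtain ⟨-, h2, -, -, h5, -, -, h8, -⟩ := h y x
  show _ = _
  linear_combination (norm := noncomm_ring) h2 + h5 + h8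

end DendBimoduleEqs

theorem dendriform_dual_bimodule_general {F A V : Type*} [Field F] [AddCommGroup A] [Module F A]
    [AddCommGroup V] [Module F V]
    (p s : A →ₗ[F] A →ₗ[F] A)
    (lp rp ls rs : A →ₗ[F] Module.End F V)
    (hbim : DendBimoduleEqs (fun x y => p x y) (fun x y => s x y)
      (fun x => lp x) (fun x => rp x) (fun x => ls x) (fun x => rs x)) :
    DendBimoduleEqs (V := Module.Dual F V) (fun x y => p x y) (fun x y => s x y)
      (fun x => -((rs x).dualMap))
      (fun x => (ls x).dualMap + (lp x).dualMap)
      (fun x => (rs x).dualMap + (rp x).dualMap)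
      (fun x => -((lp x).dualMap)) := by
  intro x y
  obtain ⟨-, -, h3, h4, -, h6, h7, -, -⟩ := hbim x y
  obtain ⟨-, h2, -, -, -, -, -, h8, -⟩ := hbim y x
  simp only [← LinearMap.dualMap_add, ← LinearMap.dualMap_neg, ← LinearMap.dualMap_mul,
    map_add lp, map_add rs]
  refine ⟨congrArg _ ?_, congrArg _ ?_, congrArg _ ?_, congrArg _ ?_, congrArg _ ?_,
    congrArg _ ?_, congrArg _ ?_, congrArg _ ?_, congrArg _ ?_⟩
  · linear_combination (norm := noncomm_ring) hbim.lstar_mul x y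
  · linear_combination (norm := noncomm_ring) -h8
  · linear_combination (norm := noncomm_ring) h4
  · linear_combination (norm := noncomm_ring) h3
  · linear_combination (norm := noncomm_ring) (hbim.commute_rstar_lstar x y).eq
  · linear_combination (norm := noncomm_ring) h7
  · linear_combination (norm := noncomm_ring) h6
  · linear_combination (norm := noncomm_ring) -h2
  · linear_combination (norm := noncomm_ring) -(hbim.rstar_mul x y)

/-- the dual bimodule `(V*, −r_≻*, l_≻*+l_≺*, r_≻*+r_≺*, −l_≺*)`
of a bimodule `(V, l_≺, r_≺, l_≻, r_≻)` over a dendriform dialgebra. -/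
theorem dendriform_dual_bimodule {F A V : Type*} [Field F] [AddCommGroup A] [Module F A]
    [AddCommGroup V] [Module F V] [FiniteDimensional F V]
    (p s : A →ₗ[F] A →ₗ[F] A)
    (hd : DendriformEqs (fun x y => p x y) (fun x y => s x y))
    (lp rp ls rs : A →ₗ[F] Module.End F V)
    (hbim : DendBimoduleEqs (fun x y => p x y) (fun x y => s x y)
      (fun x => lp x) (fun x => rp x) (fun x => ls x) (fun x => rs x)) :
    DendBimoduleEqs (V := Module.Dual F V) (fun x y => p x y) (fun x y => s x y)
      (fun x => -((rs x).dualMap))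
      (fun x => (ls x).dualMap + (lp x).dualMap)
      (fun x => (rs x).dualMap + (rp x).dualMap)
      (fun x => -((lp x).dualMap)) :=
  dendriform_dual_bimodule_general p s lp rp ls rs hbim
end

section
/- Let A be a vector space with four bilinear operations ↖, ↗, ↙, ↘. Then (A, ↖, ↗, ↙, ↘) is a quadri-algebra if and only if (A, ≺, ≻) with x≺y := x↖y + x↙y and x≻y := x↗y + x↘y is a dendriform dialgebra and (A, L_↙, R_↖, L_↘, R_↗) is a bimodule of this dendriform dialgebra, where L_∘(x)y = x∘y and R_∘(x)y = y∘x denote left and right multiplication operators. -/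
/-!
Each quadri-algebra axiom expresses `(a ∘ b) ∘' c` through `a ∘'' (b ∘''' c)`. Read as an identity
of operators applied to one of the three variables, it is a bimodule axiom: of the form
`r r = r` when that variable is `a`, `r l = l r` when it is `b`, and `l = l l` when it is `c`.
This matches the nine quadri-algebra axioms with the nine bimodule axioms one to one. Arranging
the quadri-algebra axioms in a 3 × 3 array, the dendriform axioms of `≺ = ↖ + ↙`, `≻ = ↗ + ↘` are
the sums of its columns.
-/

theorem dendriformEqs_horizontal_of_quadriEqs {R M : Type*} [CommSemiring R] [AddCommMonoid M]
    [Module R M] {nw ne sw se : M →ₗ[R] M →ₗ[R] M}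
    (h : QuadriEqs (fun x y => nw x y) (fun x y => ne x y)
      (fun x y => sw x y) (fun x y => se x y)) :
    DendriformEqs (fun x y => nw x y + sw x y) (fun x y => ne x y + se x y) := by
  intro x y z
  obtain ⟨q1, q2, q3, q4, q5, q6, q7, q8, q9⟩ := h x y z
  refine ⟨?_, ?_, ?_⟩
  · have sum := congr($q1 + $q4 + $q7)
    simp only [map_add, LinearMap.add_apply] at sum ⊢
    abel_nf at sum ⊢
    exact sum
  · have sum := congr($q2 + $q5 + $q8)
    simp only [map_add, LinearMap.add_apply] at sum ⊢
    abel_nf at sum ⊢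
    exact sum
  · have sum := congr($q3 + $q6 + $q9)
    simp only [map_add, LinearMap.add_apply] at sum ⊢
    abel_nf at sum ⊢
    exact sum

theorem quadriEqs_iff_dendBimoduleEqs {F A : Type*} [Field F] [AddCommGroup A] [Module F A]
    (nw ne sw se : A →ₗ[F] A →ₗ[F] A) :
    QuadriEqs (fun x y => nw x y) (fun x y => ne x y)
        (fun x y => sw x y) (fun x y => se x y) ↔
      DendBimoduleEqs (V := A)
        (fun x y => nw x y + sw x y) (fun x y => ne x y + se x y)
        (fun x => sw x) (fun x => nw.flip x) (fun x => se x) (fun x => ne.flip x) := by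
  simp only [QuadriEqs, DendBimoduleEqs, LinearMap.ext_iff, Module.End.mul_apply,
    LinearMap.add_apply, LinearMap.flip_apply, map_add, add_comm, add_left_comm]
  constructor
  · intro h x y
    exact ⟨fun z => (h z x y).1, fun z => (h x z y).2.2.2.1, fun z => (h x y z).2.2.2.2.2.2.1,
      fun z => (h z x y).2.1, fun z => (h x z y).2.2.2.2.1, fun z => (h x y z).2.2.2.2.2.2.2.1,
      fun z => (h z x y).2.2.1, fun z => (h x z y).2.2.2.2.2.1, fun z => (h x y z).2.2.2.2.2.2.2.2⟩
  · intro h x y z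
    exact ⟨(h y z).1 x, (h y z).2.2.2.1 x, (h y z).2.2.2.2.2.2.1 x,
      (h x z).2.1 y, (h x z).2.2.2.2.1 y, (h x z).2.2.2.2.2.2.2.1 y,
      (h x y).2.2.1 z, (h x y).2.2.2.2.2.1 z, (h x y).2.2.2.2.2.2.2.2 z⟩

/-- `(A,↖,↗,↙,↘)` is a quadri-algebra iff `(A,≺,≻)` with
`≺ = ↖+↙`, `≻ = ↗+↘` is a dendriform dialgebra and
`(A, L_↙, R_↖, L_↘, R_↗)` is a bimodule of it. -/
theorem quadri_iff_horizontal_dendriform_bimodule {F A : Type*} [Field F]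
    [AddCommGroup A] [Module F A]
    (nw ne sw se : A →ₗ[F] A →ₗ[F] A) :
    QuadriEqs (fun x y => nw x y) (fun x y => ne x y)
        (fun x y => sw x y) (fun x y => se x y) ↔
      (DendriformEqs (fun x y => nw x y + sw x y) (fun x y => ne x y + se x y) ∧
        DendBimoduleEqs (V := A)
          (fun x y => nw x y + sw x y) (fun x y => ne x y + se x y)
          (fun x => sw x) (fun x => nw.flip x) (fun x => se x) (fun x => ne.flip x)) :=
  ⟨fun h => ⟨dendriformEqs_horizontal_of_quadriEqs h, (quadriEqs_iff_dendBimoduleEqs _ _ _ _).mp h⟩,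
    fun h => (quadriEqs_iff_dendBimoduleEqs _ _ _ _).mpr h.2⟩
end

section
/- Let A be a vector space with four bilinear operations ↖, ↗, ↙, ↘. Then (A, ↖, ↗, ↙, ↘) is a quadri-algebra if and only if (A, ∧, ∨) with x∧y := x↖y + x↗y and x∨y := x↙y + x↘y is a dendriform dialgebra (with ∧ as ≺ and ∨ as ≻) and (A, L_↗, R_↖, L_↘, R_↙) is a bimodule of this dendriform dialgebra. -/
/-!
Evaluated at a vector `v`, each of the nine bimodule identities for `L_↗, R_↖, L_↘, R_↙`
is literally one of the nine quadri-algebra axioms (with `v` in the position of the acted-on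
argument), so the bimodule condition is equivalent to being a quadri-algebra. Each dendriform
axiom for `(∧, ∨)` is the sum of one row of three quadri-algebra axioms.
-/

theorem QuadriEqs.dendriformEqs_vertical {R A : Type*} [CommSemiring R] [AddCommMonoid A]
    [Module R A] {nw ne sw se : A →ₗ[R] A →ₗ[R] A}
    (h : QuadriEqs (fun x y => nw x y) (fun x y => ne x y)
      (fun x y => sw x y) (fun x y => se x y)) :
    DendriformEqs (fun x y => nw x y + ne x y) (fun x y => sw x y + se x y) := by
  intro x y z
  obtain ⟨h1, h2, h3, h4, h5, h6, h7, h8, h9⟩ := h x y z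
  dsimp only at h1 h2 h3 h4 h5 h6 h7 h8 h9 ⊢
  refine ⟨?_, ?_, ?_⟩
  · rw [map_add nw, LinearMap.add_apply, h1, h2, h3]
    simp only [map_add]
    abel
  · rw [map_add nw, LinearMap.add_apply, h4, h5, h6, add_assoc, ← map_add (se x)]
  · nth_rw 1 [add_add_add_comm]
    rw [map_add sw, LinearMap.add_apply, h7, h8, ← add_assoc (nw x y + ne x y), h9, add_assoc,
      ← map_add]

theorem dendBimoduleEqs_vertical_iff_quadriEqs {F A : Type*} [Field F] [AddCommGroup A]
    [Module F A] (nw ne sw se : A →ₗ[F] A →ₗ[F] A) :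
    DendBimoduleEqs (V := A)
        (fun x y => nw x y + ne x y) (fun x y => sw x y + se x y)
        (fun x => ne x) (fun x => nw.flip x) (fun x => se x) (fun x => sw.flip x) ↔
      QuadriEqs (fun x y => nw x y) (fun x y => ne x y)
        (fun x y => sw x y) (fun x y => se x y) := by
  simp only [DendBimoduleEqs, QuadriEqs, LinearMap.ext_iff, Module.End.mul_apply,
    LinearMap.add_apply, LinearMap.flip_apply, add_assoc]
  constructor
  · intro h x y z
    exact ⟨(h y z).1 x, (h x z).2.1 y, (h x y).2.2.1 z, (h y z).2.2.2.1 x, (h x z).2.2.2.2.1 y,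
      (h x y).2.2.2.2.2.1 z, (h y z).2.2.2.2.2.2.1 x, (h x z).2.2.2.2.2.2.2.1 y,
      (h x y).2.2.2.2.2.2.2.2 z⟩
  · intro h x y
    exact ⟨fun v => (h v x y).1, fun v => (h x v y).2.1, fun v => (h x y v).2.2.1,
      fun v => (h v x y).2.2.2.1, fun v => (h x v y).2.2.2.2.1, fun v => (h x y v).2.2.2.2.2.1,
      fun v => (h v x y).2.2.2.2.2.2.1, fun v => (h x v y).2.2.2.2.2.2.2.1,
      fun v => (h x y v).2.2.2.2.2.2.2.2⟩

/-- `(A,↖,↗,↙,↘)` is a quadri-algebra iff `(A,∧,∨)` with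
`∧ = ↖+↗` (as ≺), `∨ = ↙+↘` (as ≻) is a dendriform dialgebra and
`(A, L_↗, R_↖, L_↘, R_↙)` is a bimodule of it. -/
theorem quadri_iff_vertical_dendriform_bimodule {F A : Type*} [Field F]
    [AddCommGroup A] [Module F A]
    (nw ne sw se : A →ₗ[F] A →ₗ[F] A) :
    QuadriEqs (fun x y => nw x y) (fun x y => ne x y)
        (fun x y => sw x y) (fun x y => se x y) ↔
      (DendriformEqs (fun x y => nw x y + ne x y) (fun x y => sw x y + se x y) ∧
        DendBimoduleEqs (V := A)
          (fun x y => nw x y + ne x y) (fun x y => sw x y + se x y)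
          (fun x => ne x) (fun x => nw.flip x) (fun x => se x) (fun x => sw.flip x)) := by
  rw [dendBimoduleEqs_vertical_iff_quadriEqs]
  exact ⟨fun h => ⟨h.dendriformEqs_vertical, h⟩, And.right⟩
end

section
/- Let (A, ∧, ∨) be a finite-dimensional dendriform dialgebra equipped with a nondegenerate 2-cocycle 𝔅, i.e., a nondegenerate symmetric bilinear form satisfying 𝔅(x⋆y, z) = 𝔅(y, z∧x) + 𝔅(x, y∨z) for all x, y, z, where x⋆y = x∧y + x∨y. Define four bilinear operations by 𝔅(x↖y, z) = 𝔅(x, y⋆z), 𝔅(x↗y, z) = −𝔅(y, z∨x), 𝔅(x↙y, z) = −𝔅(x, y∧z), 𝔅(x↘y, z) = 𝔅(y, z⋆x). Then (A, ↖, ↗, ↙, ↘) is a quadri-algebra whose associated vertical dendriform dialgebra is (A, ∧, ∨), i.e., x∧y = x↖y + x↗y and x∨y = x↙y + x↘y. -/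
/-!
Pairing with `𝔅` turns every quadri-algebra axiom into a dendriform one. The defining
identities give `𝔅(x≺y, z) = 𝔅(x, y∨z)` and `𝔅(x≻y, z) = 𝔅(y, z∧x)`, and the cocycle
identity together with symmetry gives `𝔅(x∧y, z) = 𝔅(x↖y + x↗y, z)` and
`𝔅(x∨y, z) = 𝔅(x↙y + x↘y, z)`, whence the vertical compatibility by nondegeneracy.
After pairing both sides of an axiom with an arbitrary `t` and moving every operation into
the second slot, each of the nine axioms becomes one of the three dendriform axioms, or
the associativity of `⋆` that they imply, evaluated at a permutation of `x, y, z, t`.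
-/

theorem LinearMap.SeparatingLeft.eq_of_forall_apply_eq {R M N : Type*} [CommRing R]
    [AddCommGroup M] [Module R M] [AddCommGroup N] [Module R N] {B : M →ₗ[R] N →ₗ[R] R}
    (hB : B.SeparatingLeft) {a b : M} (h : ∀ t, B a t = B b t) : a = b :=
  LinearMap.ker_eq_bot.mp (separatingLeft_iff_ker_eq_bot.mp hB) (LinearMap.ext h)

section

variable {R A : Type*} [CommRing R] [AddCommGroup A] [Module R A]
  {B : A →ₗ[R] A →ₗ[R] R} {w v nw ne sw se : A →ₗ[R] A →ₗ[R] A}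
  (hB : B.SeparatingLeft)
  (hd : DendriformEqs (fun x y => w x y) (fun x y => v x y))
  (hsym : ∀ x y : A, B x y = B y x)
  (hcoc : ∀ x y z : A, B (w x y + v x y) z = B y (w z x) + B x (v y z))
  (hnw : ∀ x y z : A, B (nw x y) z = B x (w y z + v y z))
  (hne : ∀ x y z : A, B (ne x y) z = -B y (v z x))
  (hsw : ∀ x y z : A, B (sw x y) z = -B x (w y z))
  (hse : ∀ x y z : A, B (se x y) z = B y (w z x + v z x))

include hd in
theorem star_assoc_of_dendriformEqs (x y z : A) :
    w (w x y + v x y) z + v (w x y + v x y) z = w x (w y z + v y z) + v x (w y z + v y z) := by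
  obtain ⟨h₁, h₂, h₃⟩ := hd x y z
  beta_reduce at h₁ h₂ h₃
  rw [map_add w, LinearMap.add_apply, h₁, h₂, h₃, map_add (v x)]
  abel

include hsym hcoc in
theorem apply_wedge_of_cocycle (x y z : A) :
    B (w x y) z = B x (w y z + v y z) - B y (v z x) := by
  rw [hsym (w x y), hsym x]
  linear_combination -(hcoc y z x)

include hsym hcoc in
theorem apply_vee_of_cocycle (x y z : A) :
    B (v x y) z = B y (w z x + v z x) - B x (w y z) := by
  rw [hsym (v x y), hsym y]
  linear_combination -(hcoc z x y)

include hnw hsw in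
theorem apply_nw_add_sw (x y z : A) : B (nw x y + sw x y) z = B x (v y z) := by
  rw [map_add, LinearMap.add_apply, hnw, hsw, map_add]
  ring

include hne hse in
theorem apply_ne_add_se (x y z : A) : B (ne x y + se x y) z = B y (w z x) := by
  rw [map_add, LinearMap.add_apply, hne, hse, map_add]
  ring

include hB hsym hcoc hnw hne in
theorem wedge_eq_nw_add_ne (x y : A) : w x y = nw x y + ne x y :=
  hB.eq_of_forall_apply_eq fun t => by
    rw [map_add, LinearMap.add_apply, hnw, hne, apply_wedge_of_cocycle hsym hcoc]
    ring

include hB hsym hcoc hsw hse in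
theorem vee_eq_sw_add_se (x y : A) : v x y = sw x y + se x y :=
  hB.eq_of_forall_apply_eq fun t => by
    rw [map_add, LinearMap.add_apply, hsw, hse, apply_vee_of_cocycle hsym hcoc]
    ring

include hB hd hnw hne hsw hse in
theorem quadriEqs_of_transpose (hw : ∀ x y : A, w x y = nw x y + ne x y)
    (hv : ∀ x y : A, v x y = sw x y + se x y) :
    QuadriEqs (fun x y => nw x y) (fun x y => ne x y)
      (fun x y => sw x y) (fun x y => se x y) := by
  have hstar (x y : A) : w x y + sw x y + se x y = w x y + v x y := by rw [hv, add_assoc]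
  have D₁ (x y z : A) := (hd x y z).1
  have D₂ (x y z : A) := (hd x y z).2.1
  have D₃ (x y z : A) := (hd x y z).2.2
  intro x y z
  simp only [← hw, ← hv, hstar]
  refine ⟨?_, ?_, ?_, ?_, ?_, ?_, ?_, ?_, ?_⟩ <;> refine hB.eq_of_forall_apply_eq fun t => ?_
  · simp only [hnw, star_assoc_of_dendriformEqs hd]
  · simp only [hnw, hne, apply_nw_add_sw hnw hsw, D₃]
  · simp only [hne, apply_ne_add_se hne hse, D₂]
  · simp only [hnw, hsw, D₁]
  · simp only [hnw, hse, star_assoc_of_dendriformEqs hd]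
  · simp only [hne, hse, D₃]
  · simp only [hsw, apply_nw_add_sw hnw hsw, D₂]
  · simp only [hsw, hse, apply_ne_add_se hne hse, D₁]
  · simp only [hse, star_assoc_of_dendriformEqs hd]

end

theorem dendriform_cocycle_quadri_general {F A : Type*} [Field F] [AddCommGroup A] [Module F A]
    (w v : A →ₗ[F] A →ₗ[F] A)
    (hd : DendriformEqs (fun x y => w x y) (fun x y => v x y))
    (B : A →ₗ[F] A →ₗ[F] F)
    (hsym : ∀ x y : A, B x y = B y x)
    (hnd : ∀ x : A, (∀ y : A, B x y = 0) → x = 0)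
    (hcoc : ∀ x y z : A, B (w x y + v x y) z = B y (w z x) + B x (v y z))
    (nw ne sw se : A →ₗ[F] A →ₗ[F] A)
    (hnw : ∀ x y z : A, B (nw x y) z = B x (w y z + v y z))
    (hne : ∀ x y z : A, B (ne x y) z = -B y (v z x))
    (hsw : ∀ x y z : A, B (sw x y) z = -B x (w y z))
    (hse : ∀ x y z : A, B (se x y) z = B y (w z x + v z x)) :
    QuadriEqs (fun x y => nw x y) (fun x y => ne x y)
        (fun x y => sw x y) (fun x y => se x y) ∧
      (∀ x y : A, w x y = nw x y + ne x y ∧ v x y = sw x y + se x y) := by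
  have hw := wedge_eq_nw_add_ne hnd hsym hcoc hnw hne
  have hv := vee_eq_sw_add_se hnd hsym hcoc hsw hse
  exact ⟨quadriEqs_of_transpose hnd hd hnw hne hsw hse hw hv, fun x y => ⟨hw x y, hv x y⟩⟩

/-- a dendriform dialgebra `(A,∧,∨)` with a nondegenerate
2-cocycle `𝔅` induces a quadri-algebra whose associated vertical dendriform
dialgebra is `(A,∧,∨)`, where the four operations are defined by
`𝔅(x↖y,z)=𝔅(x,y⋆z)`, `𝔅(x↗y,z)=−𝔅(y,z∨x)`, `𝔅(x↙y,z)=−𝔅(x,y∧z)`,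
`𝔅(x↘y,z)=𝔅(y,z⋆x)`. -/
theorem dendriform_cocycle_quadri {F A : Type*} [Field F] [AddCommGroup A] [Module F A]
    [FiniteDimensional F A]
    (w v : A →ₗ[F] A →ₗ[F] A)
    (hd : DendriformEqs (fun x y => w x y) (fun x y => v x y))
    (B : A →ₗ[F] A →ₗ[F] F)
    (hsym : ∀ x y : A, B x y = B y x)
    (hnd : ∀ x : A, (∀ y : A, B x y = 0) → x = 0)
    (hcoc : ∀ x y z : A, B (w x y + v x y) z = B y (w z x) + B x (v y z))
    (nw ne sw se : A →ₗ[F] A →ₗ[F] A)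
    (hnw : ∀ x y z : A, B (nw x y) z = B x (w y z + v y z))
    (hne : ∀ x y z : A, B (ne x y) z = -B y (v z x))
    (hsw : ∀ x y z : A, B (sw x y) z = -B x (w y z))
    (hse : ∀ x y z : A, B (se x y) z = B y (w z x + v z x)) :
    QuadriEqs (fun x y => nw x y) (fun x y => ne x y)
        (fun x y => sw x y) (fun x y => se x y) ∧
      (∀ x y : A, w x y = nw x y + ne x y ∧ v x y = sw x y + se x y) :=
  dendriform_cocycle_quadri_general w v hd B hsym hnd hcoc nw ne sw se hnw hne hsw hse
end

section
/- Every Manin triple of dendriform dialgebras associated to a nondegenerate 2-cocycle is isomorphic to a standard one, i.e., to one of the form (A⁺ ⊕ (A⁺)*, A⁺, (A⁺)*, 𝔅_S) where 𝔅_S(x + a*, y + b*) = ⟨a*, y⟩ + ⟨x, b*⟩. -/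
/-- The standard bilinear form `𝔅_S(x+a*, y+b*) = ⟨a*,y⟩ + ⟨x,b*⟩` on `P ⊕ P*`. -/
def standardForm {F P : Type*} [Field F] [AddCommGroup P] [Module F P]
    (u v : P × Module.Dual F P) : F :=
  u.2 v.1 + v.2 u.1

/-!
Write `A = A⁺ ⊕ A⁻`. Since both summands are isotropic and `𝔅` is nondegenerate, `m ↦ 𝔅(m, -)|_{A⁺}`
embeds `A⁻` into `(A⁺)*` and symmetrically `A⁺` into `(A⁻)*`; so `A⁻ ≅ (A⁺)*` by counting
dimensions. The resulting linear isomorphism `A ≅ A⁺ ⊕ (A⁺)*` carries `𝔅` to `𝔅_S`, and transporting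
the two products along it gives the standard Manin triple.
-/

def IsTwoCocycle {A R : Type*} [Add A] [Add R] (p s : A → A → A) (β : A → A → R) : Prop :=
  ∀ x y z : A, β (p x y + s x y) z = β y (p z x) + β x (s y z)

theorem Function.Semiconj₂.forall_mem_of_surjective {A A' : Type*} {φ : A → A'}
    {p : A → A → A} {p' : A' → A' → A'} {S : Set A} {S' : Set A'}
    (hp : Function.Semiconj₂ φ p p') (hφ : Function.Surjective φ)
    (hS : ∀ x, φ x ∈ S' ↔ x ∈ S) (hcl : ∀ x ∈ S, ∀ y ∈ S, p x y ∈ S) :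
    ∀ u ∈ S', ∀ u' ∈ S', p' u u' ∈ S' := by
  intro u hu u' hu'
  obtain ⟨x, rfl⟩ := hφ u
  obtain ⟨y, rfl⟩ := hφ u'
  rw [← hp.eq, hS]
  exact hcl x ((hS x).1 hu) y ((hS y).1 hu')

section Transport

variable {A A' R : Type*} [AddZeroClass A] [AddZeroClass A'] {φ : A →+ A'}
  {p s : A → A → A} {p' s' : A' → A' → A'}

theorem DendriformEqs.of_surjective (hφ : Function.Surjective φ)
    (hp : Function.Semiconj₂ φ p p') (hs : Function.Semiconj₂ φ s s')
    (hd : DendriformEqs p s) : DendriformEqs p' s' := by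
  intro u₁ u₂ u₃
  obtain ⟨x, rfl⟩ := hφ u₁
  obtain ⟨y, rfl⟩ := hφ u₂
  obtain ⟨z, rfl⟩ := hφ u₃
  simp only [← hp.eq, ← hs.eq, ← map_add]
  obtain ⟨h₁, h₂, h₃⟩ := hd x y z
  exact ⟨congrArg φ h₁, congrArg φ h₂, congrArg φ h₃⟩

theorem IsTwoCocycle.of_surjective [Add R] {β : A → A → R} {β' : A' → A' → R}
    (hφ : Function.Surjective φ)
    (hp : Function.Semiconj₂ φ p p') (hs : Function.Semiconj₂ φ s s')
    (hβ : ∀ x y, β x y = β' (φ x) (φ y)) (hc : IsTwoCocycle p s β) :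
    IsTwoCocycle p' s' β' := by
  intro u₁ u₂ u₃
  obtain ⟨x, rfl⟩ := hφ u₁
  obtain ⟨y, rfl⟩ := hφ u₂
  obtain ⟨z, rfl⟩ := hφ u₃
  simp only [← hp.eq, ← hs.eq, ← map_add, ← hβ]
  exact hc x y z

end Transport

namespace LinearMap

variable {F A : Type*} [Field F] [AddCommGroup A] [Module F A]
  {B : A →ₗ[F] A →ₗ[F] F} {P M : Submodule F A}

theorem injective_domRestrict₁₂_of_isotropic (hB : B.SeparatingLeft) (hPM : Codisjoint P M)
    (hM : ∀ x ∈ M, ∀ y ∈ M, B x y = 0) : Function.Injective (B.domRestrict₁₂ M P) := by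
  refine (injective_iff_map_eq_zero _).2 fun m hm => Subtype.ext (hB m fun y => ?_)
  obtain ⟨p, hp, m', hm', rfl⟩ := Submodule.mem_sup.1 (hPM.eq_top ▸ Submodule.mem_top (x := y))
  rw [map_add, hM m m.2 m' hm', add_zero]
  exact LinearMap.congr_fun hm ⟨p, hp⟩

variable [FiniteDimensional F A] (hB : B.SeparatingLeft) (hPM : IsCompl P M)
  (hP : ∀ x ∈ P, ∀ y ∈ P, B x y = 0) (hM : ∀ x ∈ M, ∀ y ∈ M, B x y = 0)
include hB hPM hP hM

theorem finrank_eq_of_isCompl_of_isotropic : Module.finrank F M = Module.finrank F P := by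
  have hMP := finrank_le_finrank_of_injective
    (injective_domRestrict₁₂_of_isotropic hB hPM.codisjoint hM)
  have hPM := finrank_le_finrank_of_injective
    (injective_domRestrict₁₂_of_isotropic hB hPM.symm.codisjoint hP)
  rw [Subspace.dual_finrank_eq] at hMP hPM
  exact le_antisymm hMP hPM

noncomputable def equivProdDualOfIsotropic : A ≃ₗ[F] P × Module.Dual F P :=
  (P.prodEquivOfIsCompl M hPM).symm ≪≫ₗ (LinearEquiv.refl F P).prodCongr
    ((B.domRestrict₁₂ M P).linearEquivOfInjective
      (injective_domRestrict₁₂_of_isotropic hB hPM.codisjoint hM)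
      ((finrank_eq_of_isCompl_of_isotropic hB hPM hP hM).trans Subspace.dual_finrank_eq.symm))

theorem equivProdDualOfIsotropic_apply_add (p : P) (m : M) :
    equivProdDualOfIsotropic hB hPM hP hM (p + m) = (p, B.domRestrict₁₂ M P m) := by
  have : (P.prodEquivOfIsCompl M hPM).symm (p + m) = (p, m) :=
    (P.prodEquivOfIsCompl M hPM).symm_apply_eq.2 rfl
  simp [equivProdDualOfIsotropic, this]

theorem equivProdDualOfIsotropic_fst_eq_zero_iff (x : A) :
    (equivProdDualOfIsotropic hB hPM hP hM x).1 = 0 ↔ x ∈ M :=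
  Submodule.prodEquivOfIsCompl_symm_apply_fst_eq_zero P M hPM

theorem equivProdDualOfIsotropic_snd_eq_zero_iff (x : A) :
    (equivProdDualOfIsotropic hB hPM hP hM x).2 = 0 ↔ x ∈ P := by
  simp only [equivProdDualOfIsotropic, LinearEquiv.trans_apply, LinearEquiv.prodCongr_apply,
    LinearEquiv.map_eq_zero_iff]
  exact Submodule.prodEquivOfIsCompl_symm_apply_snd_eq_zero P M hPM

theorem apply_eq_standardForm_equivProdDualOfIsotropic (hsym : ∀ x y, B x y = B y x) (x y : A) :
    B x y = standardForm (equivProdDualOfIsotropic hB hPM hP hM x)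
      (equivProdDualOfIsotropic hB hPM hP hM y) := by
  obtain ⟨⟨p, m⟩, rfl⟩ := (P.prodEquivOfIsCompl M hPM).surjective x
  obtain ⟨⟨p', m'⟩, rfl⟩ := (P.prodEquivOfIsCompl M hPM).surjective y
  rw [Submodule.coe_prodEquivOfIsCompl', Submodule.coe_prodEquivOfIsCompl',
    equivProdDualOfIsotropic_apply_add, equivProdDualOfIsotropic_apply_add]
  simp only [standardForm, domRestrict₁₂_apply, map_add, add_apply, hP p p.2 p' p'.2,
    hM m m.2 m' m'.2, zero_add, hsym (p : A) m', add_comm]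

end LinearMap

/-- every (finite-dimensional) Manin triple `(A, A⁺, A⁻, 𝔅)` of
dendriform dialgebras associated to a nondegenerate 2-cocycle is isomorphic to a
standard one on `A⁺ ⊕ (A⁺)*` with the standard bilinear form `𝔅_S`. -/
theorem manin_triple_isomorphic_standard {F A : Type*} [Field F] [AddCommGroup A]
    [Module F A] [FiniteDimensional F A]
    (w v : A →ₗ[F] A →ₗ[F] A)
    (hd : DendriformEqs (fun x y => w x y) (fun x y => v x y))
    (B : A →ₗ[F] A →ₗ[F] F)
    (hsym : ∀ x y : A, B x y = B y x)
    (hnd : ∀ x : A, (∀ y : A, B x y = 0) → x = 0)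
    (hcoc : ∀ x y z : A, B (w x y + v x y) z = B y (w z x) + B x (v y z))
    (P M : Submodule F A) (hcompl : IsCompl P M)
    (hPsub : ∀ x ∈ P, ∀ y ∈ P, w x y ∈ P ∧ v x y ∈ P)
    (hMsub : ∀ x ∈ M, ∀ y ∈ M, w x y ∈ M ∧ v x y ∈ M)
    (hPiso : ∀ x ∈ P, ∀ y ∈ P, B x y = 0)
    (hMiso : ∀ x ∈ M, ∀ y ∈ M, B x y = 0) :
    ∃ (w' v' : (P × Module.Dual F P) →ₗ[F] (P × Module.Dual F P) →ₗ[F]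
        (P × Module.Dual F P)) (φ : A ≃ₗ[F] P × Module.Dual F P),
      -- the standard space is a dendriform dialgebra
      DendriformEqs (fun u u' => w' u u') (fun u u' => v' u u') ∧
      -- `P` (first factor) and `P*` (second factor) are sub-dialgebras
      (∀ u u' : P × Module.Dual F P, u.2 = 0 → u'.2 = 0 →
        (w' u u').2 = 0 ∧ (v' u u').2 = 0) ∧
      (∀ u u' : P × Module.Dual F P, u.1 = 0 → u'.1 = 0 →
        (w' u u').1 = 0 ∧ (v' u u').1 = 0) ∧
      -- the standard bilinear form is a 2-cocycle
      (∀ u u' u'' : P × Module.Dual F P,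
        standardForm (F := F) (w' u u' + v' u u') u''
          = standardForm (F := F) u' (w' u'' u) + standardForm (F := F) u (v' u' u'')) ∧
      -- `φ` is an isomorphism of Manin triples
      (∀ x y : A, φ (w x y) = w' (φ x) (φ y) ∧ φ (v x y) = v' (φ x) (φ y)) ∧
      (∀ x ∈ P, (φ x).2 = 0) ∧ (∀ x ∈ M, (φ x).1 = 0) ∧
      (∀ x y : A, B x y = standardForm (F := F) (φ x) (φ y)) := by
  set φ := B.equivProdDualOfIsotropic hnd hcompl hPiso hMiso
  set w' := φ.arrowCongr (φ.arrowCongr φ) w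
  set v' := φ.arrowCongr (φ.arrowCongr φ) v
  have hφw : Function.Semiconj₂ φ (fun x y => w x y) (fun u u' => w' u u') :=
    fun x y => by simp [w']
  have hφv : Function.Semiconj₂ φ (fun x y => v x y) (fun u u' => v' u u') :=
    fun x y => by simp [v']
  have hsurj : Function.Surjective φ.toAddMonoidHom := φ.surjective
  have hP : ∀ x, φ x ∈ {u | u.2 = 0} ↔ x ∈ P :=
    B.equivProdDualOfIsotropic_snd_eq_zero_iff hnd hcompl hPiso hMiso
  have hM : ∀ x, φ x ∈ {u | u.1 = 0} ↔ x ∈ M :=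
    B.equivProdDualOfIsotropic_fst_eq_zero_iff hnd hcompl hPiso hMiso
  have hB := B.apply_eq_standardForm_equivProdDualOfIsotropic hnd hcompl hPiso hMiso hsym
  refine ⟨w', v', φ, hd.of_surjective hsurj hφw hφv, fun u u' hu hu' => ⟨?_, ?_⟩,
    fun u u' hu hu' => ⟨?_, ?_⟩, IsTwoCocycle.of_surjective hsurj hφw hφv hB hcoc,
    fun x y => ⟨hφw x y, hφv x y⟩, fun x => (hP x).2, fun x => (hM x).2, hB⟩
  · exact hφw.forall_mem_of_surjective φ.surjective hP (fun x hx y hy => (hPsub x hx y hy).1)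
      u hu u' hu'
  · exact hφv.forall_mem_of_surjective φ.surjective hP (fun x hx y hy => (hPsub x hx y hy).2)
      u hu u' hu'
  · exact hφw.forall_mem_of_surjective φ.surjective hM (fun x hx y hy => (hMsub x hx y hy).1)
      u hu u' hu'
  · exact hφv.forall_mem_of_surjective φ.surjective hM (fun x hx y hy => (hMsub x hx y hy).2)
      u hu u' hu'
end

section
/- Let A be a vector space with a collection Ω of bilinear operations, and let N : A → A be a linear operator satisfying, for each ∗ ∈ Ω, the Nijenhuis identity N(x)∗N(y) = N(N(x)∗y + x∗N(y) − N(x∗y)) for all x, y ∈ A. If N² = λ²·id for a scalar λ, then P := (−λ·id − N)/2 is a Rota-Baxter operator of weight λ, i.e., for each ∗ ∈ Ω, P(x)∗P(y) = P(P(x)∗y + x∗P(y) + λ x∗y) for all x, y ∈ A. -/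
/-!
Write `P = -½(λ + N)` and `x ∗ y` for the operation. By bilinearity,
`P x ∗ y + x ∗ P y + λ x ∗ y = -½ (N x ∗ y + x ∗ N y)`, so the right-hand side of the
Rota-Baxter identity is `¼ (λ + N)(N x ∗ y + x ∗ N y)`. The Nijenhuis identity together with
`N² = λ²` turns `N (N x ∗ y + x ∗ N y)` into `N x ∗ N y + λ² x ∗ y`, and what remains is
the expansion of `¼ (λ x + N x) ∗ (λ y + N y) = P x ∗ P y`.
-/

section

variable {R A : Type*} [CommRing R] [AddCommGroup A] [Module R A]

def IsNijenhuis (mul : A →ₗ[R] A →ₗ[R] A) (N : A →ₗ[R] A) : Prop :=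
  ∀ x y, mul (N x) (N y) = N (mul (N x) y + mul x (N y) - N (mul x y))

def IsRotaBaxter (mul : A →ₗ[R] A →ₗ[R] A) (lam : R) (P : A → A) : Prop :=
  ∀ x y, mul (P x) (P y) = P (mul (P x) y + mul x (P y) + lam • mul x y)

namespace IsNijenhuis

variable {mul : A →ₗ[R] A →ₗ[R] A} {N : A →ₗ[R] A} {lam : R}

theorem apply_mul_add_mul_of_sq_eq (hN : IsNijenhuis mul N) (hN2 : ∀ x, N (N x) = (lam * lam) • x)
    (x y : A) : N (mul (N x) y + mul x (N y)) = mul (N x) (N y) + (lam * lam) • mul x y := by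
  rw [hN x y, map_sub, hN2, sub_add_cancel]

theorem isRotaBaxter_of_sq_eq (hN : IsNijenhuis mul N) (hN2 : ∀ x, N (N x) = (lam * lam) • x)
    {half : R} (hhalf : 2 * half = 1) {P : A → A}
    (hP : ∀ x, P x = half • (-(lam • x) - N x)) : IsRotaBaxter mul lam P := by
  intro x y
  have hsum : mul (P x) y + mul x (P y) + lam • mul x y
      = -half • (mul (N x) y + mul x (N y)) := by
    simp only [hP, map_smul, map_sub, map_neg, LinearMap.smul_apply, LinearMap.sub_apply,
      LinearMap.neg_apply, smul_sub, smul_neg, smul_add, neg_smul]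
    match_scalars
    · linear_combination -lam * hhalf
    all_goals ring
  have hrhs : P (-half • (mul (N x) y + mul x (N y)))
      = (half * half) • (lam • (mul (N x) y + mul x (N y)) + mul (N x) (N y)
          + (lam * lam) • mul x y) := by
    rw [hP, map_smul, hN.apply_mul_add_mul_of_sq_eq hN2]
    match_scalars <;> ring
  rw [hsum, hrhs, hP, hP]
  simp only [map_smul, map_sub, map_neg, LinearMap.smul_apply, LinearMap.sub_apply,
    LinearMap.neg_apply, smul_sub, smul_neg, smul_add]
  match_scalars <;> ring

end IsNijenhuis

end

theorem nijenhuis_to_rota_baxter_general {F A ι : Type*} [Field F] [AddCommGroup A]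
    [Module F A] (hchar : (2 : F) ≠ 0)
    (ops : ι → A →ₗ[F] A →ₗ[F] A) (N : A →ₗ[F] A) (lam : F)
    (hNij : ∀ (i : ι) (x y : A),
      ops i (N x) (N y) = N (ops i (N x) y + ops i x (N y) - N (ops i x y)))
    (hN2 : ∀ x : A, N (N x) = (lam * lam) • x)
    (P : A → A) (hP : ∀ x : A, P x = (2 : F)⁻¹ • (-(lam • x) - N x)) :
    ∀ (i : ι) (x y : A),
      ops i (P x) (P y) = P (ops i (P x) y + ops i x (P y) + lam • ops i x y) := fun i =>
  IsNijenhuis.isRotaBaxter_of_sq_eq (hNij i) hN2 (mul_inv_cancel₀ hchar) hP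

/-- if `N` is a Nijenhuis operator for every operation in a family
`Ω` of bilinear operations on `A` and `N² = λ²·id`, then `P = (−λ·id − N)/2`
is a Rota-Baxter operator of weight `λ` for every operation in `Ω`. -/
theorem nijenhuis_to_rota_baxter {F A ι : Type*} [Field F] [AddCommGroup A]
    [Module F A] [Fintype ι] (hchar : (2 : F) ≠ 0)
    (ops : ι → A →ₗ[F] A →ₗ[F] A) (N : A →ₗ[F] A) (lam : F)
    (hNij : ∀ (i : ι) (x y : A),
      ops i (N x) (N y) = N (ops i (N x) y + ops i x (N y) - N (ops i x y)))
    (hN2 : ∀ x : A, N (N x) = (lam * lam) • x)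
    (P : A → A) (hP : ∀ x : A, P x = (2 : F)⁻¹ • (-(lam • x) - N x)) :
    ∀ (i : ι) (x y : A),
      ops i (P x) (P y) = P (ops i (P x) y + ops i x (P y) + lam • ops i x y) :=
  nijenhuis_to_rota_baxter_general hchar ops N lam hNij hN2 P hP
end

section
/- Let (A, ↖, ↗, ↙, ↘) be a finite-dimensional quadri-algebra and let ω : A ⊗ A → F be a 2-cocycle of the quadri-algebra, i.e., ω(x, y∧z) = −ω(x↙y, z) + ω(z≻x, y) and ω(x, y∨z) = ω(x≺y, z) − ω(z↗x, y) for all x, y, z ∈ A. Then the symmetrization 𝔅(x, y) := ω(x, y) + ω(y, x) is a 2-cocycle of the associated vertical dendriform dialgebra (A, ∧, ∨), i.e., 𝔅(x⋆y, z) = 𝔅(y, z∧x) + 𝔅(x, y∨z). -/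
/-! Adding the two cocycle identities for `ω(z, x∧y)` and `ω(z, x∨y)` gives
`ω(z, x⋆y) = ω(z↖x, y) + ω(y↘z, x)`. Applying them instead to `ω(y, z∧x)` and `ω(x, y∨z)`
and adding the transposed terms `ω(z∧x, y) + ω(y∨z, x)` of `𝔅` produces
`ω(x⋆y, z)` plus exactly the same two correction terms. -/

namespace QuadriAlgebra

variable {R A : Type*} [CommRing R] [AddCommGroup A] [Module R A]
  {nw ne sw se : A →ₗ[R] A →ₗ[R] A} {om : A →ₗ[R] A →ₗ[R] R}

theorem cocycle_apply_star
    (hcoc1 : ∀ x y z : A,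
      om x (nw y z + ne y z) = -om (sw x y) z + om (ne z x + se z x) y)
    (hcoc2 : ∀ x y z : A,
      om x (sw y z + se y z) = om (nw x y + sw x y) z - om (ne z x) y)
    (x y z : A) :
    om z (nw x y + ne x y + sw x y + se x y) = om (nw z x) y + om (se y z) x := by
  have h_wedge := hcoc1 z x y
  have h_vee := hcoc2 z x y
  simp only [map_add, LinearMap.add_apply] at h_wedge h_vee ⊢
  linear_combination h_wedge + h_vee

theorem cocycle_wedge_add_vee
    (hcoc1 : ∀ x y z : A,
      om x (nw y z + ne y z) = -om (sw x y) z + om (ne z x + se z x) y)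
    (hcoc2 : ∀ x y z : A,
      om x (sw y z + se y z) = om (nw x y + sw x y) z - om (ne z x) y)
    (x y z : A) :
    om y (nw z x + ne z x) + om x (sw y z + se y z)
      = om (nw x y + ne x y + sw x y + se x y) z - om (sw y z) x - om (ne z x) y := by
  have h_wedge := hcoc1 y z x
  have h_vee := hcoc2 x y z
  simp only [map_add, LinearMap.add_apply] at h_wedge h_vee ⊢
  linear_combination h_wedge + h_vee

end QuadriAlgebra

theorem quadri_cocycle_symmetrization_general {F A : Type*} [Field F] [AddCommGroup A]
    [Module F A]
    (nw ne sw se : A →ₗ[F] A →ₗ[F] A)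
    (om : A →ₗ[F] A →ₗ[F] F)
    (hcoc1 : ∀ x y z : A,
      om x (nw y z + ne y z) = -om (sw x y) z + om (ne z x + se z x) y)
    (hcoc2 : ∀ x y z : A,
      om x (sw y z + se y z) = om (nw x y + sw x y) z - om (ne z x) y) :
    (∀ x y : A, om x y + om y x = om y x + om x y) ∧
      ∀ x y z : A,
        om (nw x y + ne x y + sw x y + se x y) z
            + om z (nw x y + ne x y + sw x y + se x y)
          = (om y (nw z x + ne z x) + om (nw z x + ne z x) y)
            + (om x (sw y z + se y z) + om (sw y z + se y z) x) := by
  refine ⟨fun x y => add_comm _ _, fun x y z => ?_⟩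
  have h_star := QuadriAlgebra.cocycle_apply_star hcoc1 hcoc2 x y z
  have h_sum := QuadriAlgebra.cocycle_wedge_add_vee hcoc1 hcoc2 x y z
  simp only [map_add, LinearMap.add_apply] at h_star h_sum ⊢
  linear_combination h_star - h_sum

/-- the symmetrization `𝔅(x,y) = ω(x,y) + ω(y,x)` of a 2-cocycle
`ω` of a quadri-algebra is a 2-cocycle of the associated vertical dendriform
dialgebra `(A,∧,∨)`. -/
theorem quadri_cocycle_symmetrization {F A : Type*} [Field F] [AddCommGroup A]
    [Module F A] [FiniteDimensional F A]
    (nw ne sw se : A →ₗ[F] A →ₗ[F] A)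
    (hq : QuadriEqs (fun x y => nw x y) (fun x y => ne x y)
      (fun x y => sw x y) (fun x y => se x y))
    (om : A →ₗ[F] A →ₗ[F] F)
    (hcoc1 : ∀ x y z : A,
      om x (nw y z + ne y z) = -om (sw x y) z + om (ne z x + se z x) y)
    (hcoc2 : ∀ x y z : A,
      om x (sw y z + se y z) = om (nw x y + sw x y) z - om (ne z x) y) :
    (∀ x y : A, om x y + om y x = om y x + om x y) ∧
      ∀ x y z : A,
        om (nw x y + ne x y + sw x y + se x y) z
            + om z (nw x y + ne x y + sw x y + se x y)
          = (om y (nw z x + ne z x) + om (nw z x + ne z x) y)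
            + (om x (sw y z + se y z) + om (sw y z + se y z) x) :=
  quadri_cocycle_symmetrization_general nw ne sw se om hcoc1 hcoc2
end

section
/- Let (A, ↖, ↗, ↙, ↘) be a finite-dimensional quadri-algebra, let r ∈ A ⊗ A be skew-symmetric, and let T_r : A* → A be the induced linear map, ⟨u*, T_r(v*)⟩ = ⟨u* ⊗ v*, r⟩. Then r satisfies the Q-equation (the pair of equations r₂₃∧r₁₂ − r₁₃≻r₂₃ + r₁₂↙r₁₃ = 0 and r₂₃∨r₁₂ − r₁₂≺r₁₃ + r₁₃↗r₂₃ = 0 in A⊗A⊗A) if and only if T_r is an O-operator of the vertical dendriform dialgebra A_v = (A, ∧, ∨) associated to the bimodule (A*, −R_↙*, L_≻*, R_≺*, −L_↗*), i.e., T_r(a*)∧T_r(b*) = T_r(−R_↙*(T_r(a*))b* + L_≻*(T_r(b*))a*) and T_r(a*)∨T_r(b*) = T_r(R_≺*(T_r(a*))b* − L_↗*(T_r(b*))a*) for all a*, b* ∈ A*. -/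
open TensorProduct Module

section OuterContraction

variable {R A : Type*} [CommSemiring R] [AddCommMonoid A] [Module R A]

noncomputable def outerContraction (f g : Dual R A) : A ⊗[R] (A ⊗[R] A) →ₗ[R] A :=
  (TensorProduct.lid R A).toLinearMap ∘ₗ
    map g ((TensorProduct.rid R A).toLinearMap ∘ₗ f.lTensor A)

@[simp] theorem outerContraction_tmul (f g : Dual R A) (x y z : A) :
    outerContraction f g (x ⊗ₜ (y ⊗ₜ z)) = g x • f z • y := by
  simp [outerContraction, smul_comm (f z)]

theorem eq_zero_iff_forall_outerContraction_eq_zero [Module.Free R A]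
    (t : A ⊗[R] (A ⊗[R] A)) :
    t = 0 ↔ ∀ f g : Dual R A, outerContraction f g t = 0 := by
  refine ⟨fun ht f g => by rw [ht, map_zero], fun h => ?_⟩
  let B := Module.Free.chooseBasis R A
  let C := B.tensorProduct (B.tensorProduct B)
  have hcoord : ∀ i j k,
      C.coord (i, j, k) = B.coord j ∘ₗ outerContraction (B.coord k) (B.coord i) := by
    intro i j k
    refine C.ext fun ⟨i', j', k'⟩ => ?_
    simp only [C, Basis.tensorProduct_apply, Basis.coord_apply, Basis.tensorProduct_repr_tmul_apply,
      Basis.repr_self, Finsupp.single_apply, smul_eq_mul, mul_ite, mul_one, mul_zero,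
      LinearMap.coe_comp, Function.comp_apply, outerContraction_tmul, ite_smul, one_smul, zero_smul,
      smul_ite, smul_zero]
    split_ifs <;> simp_all
  refine C.ext_elem fun ⟨i, j, k⟩ => ?_
  simpa [h] using LinearMap.congr_fun (hcoord i j k) t

end OuterContraction

section SkewSymmetric

variable {R A ι : Type*} [CommRing R] [AddCommGroup A] [Module R A] [Fintype ι] {a b : ι → A}

theorem sum_apply_swap_eq_neg {M : Type*} [AddCommGroup M] [Module R M]
    (hskew : TensorProduct.comm R A A (∑ i, a i ⊗ₜ b i) = -∑ i, a i ⊗ₜ b i)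
    (β : A →ₗ[R] A →ₗ[R] M) : ∑ i, β (b i) (a i) = -∑ i, β (a i) (b i) := by
  simpa using congrArg (TensorProduct.lift β) hskew

theorem sum_dual_smul_swap_eq_neg {T : Dual R A →ₗ[R] A}
    (hskew : TensorProduct.comm R A A (∑ i, a i ⊗ₜ b i) = -∑ i, a i ⊗ₜ b i)
    (hT : ∀ h : Dual R A, T h = ∑ i, h (b i) • a i) (h : Dual R A) :
    ∑ i, h (a i) • b i = -T h := by
  have hswap := sum_apply_swap_eq_neg hskew (h.smulRight LinearMap.id)
  simp only [LinearMap.smulRight_apply, LinearMap.smul_apply, LinearMap.id_apply] at hswap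
  rw [hT, hswap, neg_neg]

variable {T : Dual R A →ₗ[R] A} (β : A →ₗ[R] A →ₗ[R] A) (f g : Dual R A)

theorem outerContraction_sum_tmul_middle
    (hskew : TensorProduct.comm R A A (∑ i, a i ⊗ₜ b i) = -∑ i, a i ⊗ₜ b i)
    (hT : ∀ h : Dual R A, T h = ∑ i, h (b i) • a i) :
    outerContraction f g (∑ i, ∑ j, a j ⊗ₜ (β (a i) (b j) ⊗ₜ b i)) =
      -β (T f) (T g) := by
  rw [← map_neg, ← sum_dual_smul_swap_eq_neg hskew hT, hT]
  simp only [map_sum, map_smul, outerContraction_tmul, LinearMap.coe_sum, LinearMap.coe_smul,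
    Finset.sum_apply, Pi.smul_apply, Finset.smul_sum, smul_comm (g _)]
  exact Finset.sum_comm

theorem outerContraction_sum_tmul_right
    (hskew : TensorProduct.comm R A A (∑ i, a i ⊗ₜ b i) = -∑ i, a i ⊗ₜ b i)
    (hT : ∀ h : Dual R A, T h = ∑ i, h (b i) • a i) :
    outerContraction f g (∑ i, ∑ j, a i ⊗ₜ (a j ⊗ₜ β (b i) (b j))) =
      -T (f ∘ₗ β (T g)) := by
  rw [← map_neg, ← LinearMap.comp_neg, ← map_neg, ← sum_dual_smul_swap_eq_neg hskew hT, hT]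
  simp only [map_sum, map_smul, outerContraction_tmul, LinearMap.coe_comp, LinearMap.coe_sum,
    LinearMap.coe_smul, Function.comp_apply, Finset.sum_apply, Pi.smul_apply, smul_eq_mul,
    Finset.sum_smul, smul_smul]
  exact Finset.sum_comm

theorem outerContraction_sum_tmul_left
    (hskew : TensorProduct.comm R A A (∑ i, a i ⊗ₜ b i) = -∑ i, a i ⊗ₜ b i)
    (hT : ∀ h : Dual R A, T h = ∑ i, h (b i) • a i) :
    outerContraction f g (∑ i, ∑ j, β (a i) (a j) ⊗ₜ (b i ⊗ₜ b j)) =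
      -T (g ∘ₗ β.flip (T f)) := by
  rw [← sum_dual_smul_swap_eq_neg hskew hT, hT]
  simp [map_sum, Finset.sum_smul, smul_smul, mul_comm]

variable (nw ne sw se : A →ₗ[R] A →ₗ[R] A)

theorem outerContraction_Q_equation_fst
    (hskew : TensorProduct.comm R A A (∑ i, a i ⊗ₜ b i) = -∑ i, a i ⊗ₜ b i)
    (hT : ∀ h : Dual R A, T h = ∑ i, h (b i) • a i) :
    outerContraction f g (∑ i, ∑ j, a j ⊗ₜ[R] ((nw (a i) (b j) + ne (a i) (b j)) ⊗ₜ[R] b i)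
        - ∑ i, ∑ j, a i ⊗ₜ[R] (a j ⊗ₜ[R] (ne (b i) (b j) + se (b i) (b j)))
        + ∑ i, ∑ j, sw (a i) (a j) ⊗ₜ[R] (b i ⊗ₜ[R] b j))
      = T (-(g ∘ₗ sw.flip (T f)) + f ∘ₗ (ne + se) (T g))
        - (nw (T f) (T g) + ne (T f) (T g)) := by
  have hmiddle := outerContraction_sum_tmul_middle (nw + ne) f g hskew hT
  have hright := outerContraction_sum_tmul_right (ne + se) f g hskew hT
  simp only [LinearMap.add_apply] at hmiddle hright
  rw [map_add, map_sub, hmiddle, hright, outerContraction_sum_tmul_left sw f g hskew hT]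
  simp only [map_add, map_neg, LinearMap.add_apply]
  abel

theorem outerContraction_Q_equation_snd
    (hskew : TensorProduct.comm R A A (∑ i, a i ⊗ₜ b i) = -∑ i, a i ⊗ₜ b i)
    (hT : ∀ h : Dual R A, T h = ∑ i, h (b i) • a i) :
    outerContraction f g (∑ i, ∑ j, a j ⊗ₜ[R] ((sw (a i) (b j) + se (a i) (b j)) ⊗ₜ[R] b i)
        - ∑ i, ∑ j, (nw (a i) (a j) + sw (a i) (a j)) ⊗ₜ[R] (b i ⊗ₜ[R] b j)
        + ∑ i, ∑ j, a i ⊗ₜ[R] (a j ⊗ₜ[R] ne (b i) (b j)))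
      = T ((g ∘ₗ (nw + sw).flip (T f)) - f ∘ₗ ne (T g))
        - (sw (T f) (T g) + se (T f) (T g)) := by
  have hmiddle := outerContraction_sum_tmul_middle (sw + se) f g hskew hT
  have hleft := outerContraction_sum_tmul_left (nw + sw) f g hskew hT
  simp only [LinearMap.add_apply] at hmiddle hleft
  rw [map_add, map_sub, hmiddle, hleft, outerContraction_sum_tmul_right ne f g hskew hT, map_sub]
  abel

end SkewSymmetric

open TensorProduct in
theorem Q_equation_iff_O_operator_general {F A ι : Type*} [Field F] [AddCommGroup A]
    [Module F A] [Fintype ι]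
    (nw ne sw se : A →ₗ[F] A →ₗ[F] A)
    (a b : ι → A)
    (hskew : (TensorProduct.comm F A A) (∑ i, a i ⊗ₜ[F] b i)
      = -(∑ i, a i ⊗ₜ[F] b i))
    (T : Module.Dual F A →ₗ[F] A)
    (hT : ∀ f : Module.Dual F A, T f = ∑ i, f (b i) • a i) :
    ((∑ i, ∑ j, a j ⊗ₜ[F] ((nw (a i) (b j) + ne (a i) (b j)) ⊗ₜ[F] b i)
        - ∑ i, ∑ j, a i ⊗ₜ[F] (a j ⊗ₜ[F] (ne (b i) (b j) + se (b i) (b j)))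
        + ∑ i, ∑ j, sw (a i) (a j) ⊗ₜ[F] (b i ⊗ₜ[F] b j)
          = (0 : A ⊗[F] (A ⊗[F] A))) ∧
      (∑ i, ∑ j, a j ⊗ₜ[F] ((sw (a i) (b j) + se (a i) (b j)) ⊗ₜ[F] b i)
        - ∑ i, ∑ j, (nw (a i) (a j) + sw (a i) (a j)) ⊗ₜ[F] (b i ⊗ₜ[F] b j)
        + ∑ i, ∑ j, a i ⊗ₜ[F] (a j ⊗ₜ[F] ne (b i) (b j))
          = (0 : A ⊗[F] (A ⊗[F] A)))) ↔
      (∀ f g : Module.Dual F A,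
        (nw (T f) (T g) + ne (T f) (T g)
            = T (-(g ∘ₗ sw.flip (T f)) + f ∘ₗ (ne + se) (T g))) ∧
        (sw (T f) (T g) + se (T f) (T g)
            = T ((g ∘ₗ (nw + sw).flip (T f)) - f ∘ₗ ne (T g)))) := by
  simp only [eq_zero_iff_forall_outerContraction_eq_zero,
    outerContraction_Q_equation_fst _ _ _ _ _ _ hskew hT,
    outerContraction_Q_equation_snd _ _ _ _ _ _ hskew hT, sub_eq_zero, ← forall_and]
  exact forall₂_congr fun f g => and_congr eq_comm eq_comm

open TensorProduct in
/-- for a skew-symmetric `r = ∑ i, aᵢ ⊗ bᵢ ∈ A ⊗ A` with induced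
map `T_r : A* → A`, `T_r(v*) = ∑ i, v*(bᵢ) • aᵢ`, the `Q`-equation
(`r₂₃∧r₁₂ − r₁₃≻r₂₃ + r₁₂↙r₁₃ = 0` and `r₂₃∨r₁₂ − r₁₂≺r₁₃ + r₁₃↗r₂₃ = 0`)
holds iff `T_r` is an `O`-operator of the vertical dendriform dialgebra
`A_v = (A,∧,∨)` associated to the bimodule `(A*, −R_↙*, L_≻*, R_≺*, −L_↗*)`. -/
theorem Q_equation_iff_O_operator {F A ι : Type*} [Field F] [AddCommGroup A]
    [Module F A] [FiniteDimensional F A] [Fintype ι]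
    (nw ne sw se : A →ₗ[F] A →ₗ[F] A)
    (hq : QuadriEqs (fun x y => nw x y) (fun x y => ne x y)
      (fun x y => sw x y) (fun x y => se x y))
    (a b : ι → A)
    (hskew : (TensorProduct.comm F A A) (∑ i, a i ⊗ₜ[F] b i)
      = -(∑ i, a i ⊗ₜ[F] b i))
    (T : Module.Dual F A →ₗ[F] A)
    (hT : ∀ f : Module.Dual F A, T f = ∑ i, f (b i) • a i) :
    ((∑ i, ∑ j, a j ⊗ₜ[F] ((nw (a i) (b j) + ne (a i) (b j)) ⊗ₜ[F] b i)
        - ∑ i, ∑ j, a i ⊗ₜ[F] (a j ⊗ₜ[F] (ne (b i) (b j) + se (b i) (b j)))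
        + ∑ i, ∑ j, sw (a i) (a j) ⊗ₜ[F] (b i ⊗ₜ[F] b j)
          = (0 : A ⊗[F] (A ⊗[F] A))) ∧
      (∑ i, ∑ j, a j ⊗ₜ[F] ((sw (a i) (b j) + se (a i) (b j)) ⊗ₜ[F] b i)
        - ∑ i, ∑ j, (nw (a i) (a j) + sw (a i) (a j)) ⊗ₜ[F] (b i ⊗ₜ[F] b j)
        + ∑ i, ∑ j, a i ⊗ₜ[F] (a j ⊗ₜ[F] ne (b i) (b j))
          = (0 : A ⊗[F] (A ⊗[F] A)))) ↔
      (∀ f g : Module.Dual F A,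
        (nw (T f) (T g) + ne (T f) (T g)
            = T (-(g ∘ₗ sw.flip (T f)) + f ∘ₗ (ne + se) (T g))) ∧
        (sw (T f) (T g) + se (T f) (T g)
            = T ((g ∘ₗ (nw + sw).flip (T f)) - f ∘ₗ ne (T g)))) :=
  Q_equation_iff_O_operator_general nw ne sw se a b hskew T hT
end
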